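/- Vanishing of the derivative of the M-scale with respect to the shape matrix at the S-estimator (consistency condition, appendix). Let ρ₀ be a ρ-function, ψ₀ = ρ₀', w₀(u) = ψ₀(u)/u, 0 < δ₀ < ρ₀(c₀), and set φ(A) = det(A)^{−1/m} A for invertible m×m matrices A. Fix residuals e₁,…,e_n ∈ ℝ^m (e_i = e_i(b₀) for a fixed coefficient vector b₀). Let G₀ be symmetric positive definite and let s be a function, defined and Fréchet-differentiable on a neighborhood of G₀ in the space of symmetric m×m matrices with positive values, such that (1/n) Σ_{i=1}^n ρ₀(√(e_iᵀ φ(G⁻¹) e_i) / s(G)) = δ₀ for all symmetric positive definite G in that neighborhood. Set d_i = √(e_iᵀ φ(G₀⁻¹) e_i)/s(G₀), assume d_i > 0 for all i and Σ_{i=1}^n ψ₀(d_i) d_i ≠ 0, and assume the scatter estimating equation Σ_{i=1}^n w₀(d_i) e_i e_iᵀ = (s(G₀)² Σ_{i=1}^n ψ₀(d_i) d_i / m) · det(G₀)^{−1/m} G₀ holds. Then the Fréchet derivative of s at G₀ is zero. -/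

import Mathlib

open Matrix

noncomputable section

/-- A ρ-function with tuning constant `c`. -/
def IsRhoFunction (ρ : ℝ → ℝ) (c : ℝ) : Prop :=
  0 < c ∧ (∀ u, ρ (-u) = ρ u) ∧ ContDiff ℝ 2 ρ ∧ ρ 0 = 0 ∧
    StrictMonoOn ρ (Set.Icc 0 c) ∧ ∀ u, c ≤ u → ρ u = ρ c

/-- The space of symmetric `m × m` real matrices, as a submodule of `Fin m → Fin m → ℝ`. -/
def symMat (m : ℕ) : Submodule ℝ (Fin m → Fin m → ℝ) where
  carrier := {A | ∀ i j, A i j = A j i}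
  add_mem' := by
    intro a b ha hb i j
    simp [ha i j, hb i j]
  zero_mem' := by intro i j; rfl
  smul_mem' := by
    intro c a ha i j
    simp [ha i j]

/-- `φ(A) = det(A)^{−1/m} A`. -/
def phiMat {m : ℕ} (A : Matrix (Fin m) (Fin m) ℝ) : Matrix (Fin m) (Fin m) ℝ :=
  (A.det ^ (-(1 : ℝ) / (m : ℝ))) • A

/-!
Differentiate the defining equation of `s` along the line `t ↦ G₀ + t • H`. With `M'` the
derivative of `t ↦ φ((G₀ + t H)⁻¹)` at `0`, the derivative of `Σᵢ ρ₀(dᵢ(t))` is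
`(Σᵢ w₀(dᵢ) eᵢᵀ M' eᵢ) / (2 s²) - (s'/s) Σᵢ ψ₀(dᵢ) dᵢ`. By the scatter estimating equation the
first sum is a multiple of `tr (M' G₀)`, which vanishes because `φ` normalizes the determinant
(Jacobi's formula). As `Σᵢ ψ₀(dᵢ) dᵢ ≠ 0`, the derivative `s'` of `s` in direction `H` is zero.
-/

open Filter Topology

theorem Matrix.PosDef.eventually_add_smul {ι : Type*} [Fintype ι] {G H : Matrix ι ι ℝ}
    (hG : G.PosDef) (hH : H.IsHermitian) : ∀ᶠ t in 𝓝 (0 : ℝ), (G + t • H).PosDef := by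
  set F : ℝ → (ι → ℝ) → ℝ := fun t x => x ⬝ᵥ (G + t • H) *ᵥ x
  have hF : Continuous fun p : ℝ × (ι → ℝ) => F p.1 p.2 := by fun_prop
  -- tube lemma: positivity at `t = 0` on the compact unit sphere persists for small `t`
  have hsphere : ∀ᶠ t in 𝓝 (0 : ℝ), ∀ x ∈ Metric.sphere (0 : ι → ℝ) 1, 0 < F t x := by
    refine (isCompact_sphere 0 1).eventually_forall_of_forall_eventually fun x hx => ?_
    have hF0 : 0 < F 0 x := by
      simpa [F] using (posDef_iff_dotProduct_mulVec.mp hG).2 (ne_zero_of_mem_unit_sphere ⟨x, hx⟩)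
    exact continuousAt_const.eventually_lt (hF.continuousAt (x := ((0 : ℝ), x))) hF0
  filter_upwards [hsphere] with t ht
  refine posDef_iff_dotProduct_mulVec.mpr ⟨hG.isHermitian.add (hH.smul rfl), fun x hx => ?_⟩
  have hnorm : ‖x‖ ≠ 0 := norm_ne_zero_iff.mpr hx
  have hunit : ‖x‖⁻¹ • x ∈ Metric.sphere (0 : ι → ℝ) 1 := by simp [norm_smul, hnorm]
  have hscale : F t x = ‖x‖ ^ 2 * F t (‖x‖⁻¹ • x) := by
    simp only [F, mulVec_smul, smul_dotProduct, dotProduct_smul, smul_eq_mul]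
    field_simp
  simpa [F, hscale] using mul_pos (by positivity) (ht _ hunit)

theorem Matrix.hasDerivAt_det_one_add_smul {𝕜 ι : Type*} [NontriviallyNormedField 𝕜]
    [Fintype ι] [DecidableEq ι] (B : Matrix ι ι 𝕜) :
    HasDerivAt (fun t : 𝕜 => (1 + t • B).det) B.trace 0 := by
  have h := (det (1 + (Polynomial.X : Polynomial 𝕜) • B.map Polynomial.C)).hasDerivAt 0
  rw [derivative_det_one_add_X_smul] at h
  convert h using 2 with t
  simp [eval_det, ← smul_eq_mul_diagonal]

theorem Matrix.hasDerivAt_det_add_smul {𝕜 ι : Type*} [NontriviallyNormedField 𝕜]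
    [Fintype ι] [DecidableEq ι] {G : Matrix ι ι 𝕜} (hG : IsUnit G.det) (H : Matrix ι ι 𝕜) :
    HasDerivAt (fun t : 𝕜 => (G + t • H).det) (G.det * (G⁻¹ * H).trace) 0 := by
  have hfactor : ∀ t : 𝕜, G + t • H = G * (1 + t • (G⁻¹ * H)) := fun t => by
    rw [Matrix.mul_add, Matrix.mul_one, mul_smul_comm, ← Matrix.mul_assoc,
      mul_nonsing_inv _ hG, Matrix.one_mul]
  simp only [hfactor, det_mul]
  exact (hasDerivAt_det_one_add_smul _).const_mul _

theorem Matrix.hasDerivAt_inv_add_smul {ι : Type*} [Fintype ι] [DecidableEq ι]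
    {G : Matrix ι ι ℝ} (hG : IsUnit G.det) (H : Matrix ι ι ℝ) :
    HasDerivAt (fun t : ℝ => (G + t • H)⁻¹) (-(G⁻¹ * H * G⁻¹)) 0 := by
  let _ : NormedRing (Matrix ι ι ℝ) := Matrix.linftyOpNormedRing
  let _ : NormedAlgebra ℝ (Matrix ι ι ℝ) := Matrix.linftyOpNormedAlgebra
  let _ : CompleteSpace (Matrix ι ι ℝ) := FiniteDimensional.complete ℝ _
  have hunit : IsUnit G := (isUnit_iff_isUnit_det G).mpr hG
  have hline : HasDerivAt (fun t : ℝ => G + t • H) H 0 := by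
    have h := ((hasDerivAt_id (0 : ℝ)).smul_const H).const_add G
    rw [one_smul] at h
    exact h
  have h := (hasFDerivAt_ringInverse (𝕜 := ℝ) hunit.unit).comp_hasDerivAt_of_eq (0 : ℝ) hline
    (by simp)
  rw [_root_.neg_apply, ContinuousLinearMap.mulLeftRight_apply, coe_units_inv,
    hunit.unit_spec] at h
  exact (funext fun t : ℝ => nonsing_inv_eq_ringInverse (G + t • H)) ▸ h

theorem Matrix.trace_mul_sum_smul_vecMulVec {R ι κ : Type*} [CommRing R] [Fintype ι]
    [Fintype κ] (M : Matrix ι ι R) (w : κ → R) (x : κ → ι → R) :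
    (M * ∑ k, w k • vecMulVec (x k) (x k)).trace = ∑ k, w k * (x k ⬝ᵥ M *ᵥ x k) := by
  simp only [Matrix.mul_sum, trace_sum, mul_smul_comm, trace_smul, mul_vecMulVec,
    trace_vecMulVec, smul_eq_mul, dotProduct_comm (M *ᵥ _)]

section MatrixNorm

attribute [local instance] Matrix.linftyOpNormedAddCommGroup Matrix.linftyOpNormedSpace

theorem HasDerivAt.dotProduct_mulVec {ι : Type*} [Fintype ι] {M : ℝ → Matrix ι ι ℝ}
    {M' : Matrix ι ι ℝ} {t : ℝ} (hM : HasDerivAt M M' t) (x y : ι → ℝ) :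
    HasDerivAt (fun t => x ⬝ᵥ M t *ᵥ y) (x ⬝ᵥ M' *ᵥ y) t := by
  let ℓ : Matrix ι ι ℝ →ₗ[ℝ] ℝ :=
    { toFun := fun A => x ⬝ᵥ A *ᵥ y
      map_add' := fun A B => by simp [add_mulVec, dotProduct_add]
      map_smul' := fun c A => by simp [smul_mulVec, dotProduct_smul] }
  exact (LinearMap.toContinuousLinearMap ℓ).hasFDerivAt.comp_hasDerivAt t hM

theorem hasDerivAt_phiMat_inv_add_smul {m : ℕ} {G : Matrix (Fin m) (Fin m) ℝ} (hG : G.det ≠ 0)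
    (H : Matrix (Fin m) (Fin m) ℝ) :
    HasDerivAt (fun t : ℝ => phiMat (G + t • H)⁻¹)
      (G⁻¹.det ^ (-(1 : ℝ) / m) • (((G⁻¹ * H).trace / m) • G⁻¹ - G⁻¹ * H * G⁻¹)) 0 := by
  set p : ℝ := -(1 : ℝ) / m
  have hdetInv := (hasDerivAt_det_add_smul hG.isUnit H).inv (by simpa using hG)
  have hscalar : HasDerivAt (fun t : ℝ => (G + t • H)⁻¹.det ^ p)
      ((G⁻¹ * H).trace / m * G⁻¹.det ^ p) 0 := by
    simp only [det_nonsing_inv, Ring.inverse_eq_inv']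
    refine (hdetInv.rpow_const (p := p) (Or.inl (by simpa using hG))).congr_deriv ?_
    simp only [Pi.inv_apply, zero_smul, add_zero]
    rw [Real.rpow_sub_one (inv_ne_zero hG)]
    field_simp
    ring
  refine (hscalar.smul (hasDerivAt_inv_add_smul hG.isUnit H)).congr_deriv ?_
  simp only [zero_smul, add_zero]
  module

theorem exists_hasDerivAt_phiMat_inv_add_smul {m : ℕ} (hm : m ≠ 0)
    {G : Matrix (Fin m) (Fin m) ℝ} (hG : G.det ≠ 0) (H : Matrix (Fin m) (Fin m) ℝ) :
    ∃ M', HasDerivAt (fun t : ℝ => phiMat (G + t • H)⁻¹) M' 0 ∧ (M' * G).trace = 0 := by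
  refine ⟨_, hasDerivAt_phiMat_inv_add_smul hG H, ?_⟩
  have hGG : G⁻¹ * G = 1 := nonsing_inv_mul G hG.isUnit
  rw [smul_mul_assoc, trace_smul, sub_mul, smul_mul_assoc, Matrix.mul_assoc, hGG, Matrix.mul_one,
    trace_sub, trace_smul, trace_one, Fintype.card_fin, smul_eq_mul, smul_eq_mul,
    div_mul_cancel₀ _ (Nat.cast_ne_zero.mpr hm), sub_self, mul_zero]

end MatrixNorm

theorem hasDerivAt_sum_rho_sqrt_div {ι : Type*} [Fintype ι] {ρ : ℝ → ℝ}
    (hρ : Differentiable ℝ ρ) {q : ι → ℝ → ℝ} {Q : ι → ℝ} {σ : ℝ → ℝ} {L t₀ : ℝ} {d : ι → ℝ}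
    (hq : ∀ i, HasDerivAt (q i) (Q i) t₀) (hσ : HasDerivAt σ L t₀) (hσ₀ : σ t₀ ≠ 0)
    (hd : ∀ i, d i = √(q i t₀) / σ t₀) (hd₀ : ∀ i, d i ≠ 0) :
    HasDerivAt (fun t => ∑ i, ρ (√(q i t) / σ t))
      ((∑ i, deriv ρ (d i) / d i * Q i) / (2 * σ t₀ ^ 2) -
        L / σ t₀ * ∑ i, deriv ρ (d i) * d i) t₀ := by
  have hterm : ∀ i, HasDerivAt (fun t => ρ (√(q i t) / σ t))
      (deriv ρ (d i) / d i * Q i / (2 * σ t₀ ^ 2) - L / σ t₀ * (deriv ρ (d i) * d i)) t₀ := by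
    intro i
    have hsqrt : √(q i t₀) = d i * σ t₀ := by rw [hd i, div_mul_cancel₀ _ hσ₀]
    have hq₀ : q i t₀ ≠ 0 := fun h => hd₀ i (by simp [hd i, h])
    have h := (hρ _).hasDerivAt.comp t₀ (((hq i).sqrt hq₀).div hσ hσ₀)
    simp only [Pi.div_apply, ← hd i] at h
    refine h.congr_deriv ?_
    rw [hsqrt]
    field_simp [hd₀ i]
  refine (HasDerivAt.fun_sum fun i _ => hterm i).congr_deriv ?_
  rw [Finset.sum_sub_distrib, Finset.sum_div, Finset.mul_sum]

theorem eq_zero_of_sum_rho_sqrt_div_eventually_eq {ι : Type*} [Fintype ι] {ρ : ℝ → ℝ}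
    (hρ : Differentiable ℝ ρ) {q : ι → ℝ → ℝ} {Q : ι → ℝ} {σ : ℝ → ℝ} {L t₀ c : ℝ} {d : ι → ℝ}
    (hq : ∀ i, HasDerivAt (q i) (Q i) t₀) (hσ : HasDerivAt σ L t₀) (hσ₀ : σ t₀ ≠ 0)
    (hd : ∀ i, d i = √(q i t₀) / σ t₀) (hd₀ : ∀ i, d i ≠ 0)
    (hconst : ∀ᶠ t in 𝓝 t₀, ∑ i, ρ (√(q i t) / σ t) = c)
    (hweighted : ∑ i, deriv ρ (d i) / d i * Q i = 0) (hsum : ∑ i, deriv ρ (d i) * d i ≠ 0) :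
    L = 0 := by
  have h := (hasDerivAt_sum_rho_sqrt_div hρ hq hσ hσ₀ hd hd₀).unique
    ((hasDerivAt_const t₀ c).congr_of_eventuallyEq hconst)
  rw [hweighted, zero_div, zero_sub, neg_eq_zero, mul_eq_zero, div_eq_zero_iff] at h
  tauto

theorem symMat.isHermitian {m : ℕ} (A : symMat m) :
    (Matrix.of (A : Fin m → Fin m → ℝ)).IsHermitian :=
  IsHermitian.ext fun i j => A.2 j i

theorem M_scale_derivative_in_shape_vanishes_general
    {n m : ℕ} (hm : 1 < m)
    (ρ₀ : ℝ → ℝ) (c₀ : ℝ) (hρ₀ : IsRhoFunction ρ₀ c₀)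
    (δ₀ : ℝ)
    (w₀ : ℝ → ℝ) (hw₀ : ∀ u : ℝ, u ≠ 0 → w₀ u = deriv ρ₀ u / u)
    -- the fixed residuals e₁, …, e_n
    (e : Fin n → Fin m → ℝ)
    -- the symmetric positive definite base point G₀
    (G₀ : symMat m) (hG₀ : (Matrix.of (G₀ : Fin m → Fin m → ℝ)).PosDef)
    -- the M-scale s, positive and Fréchet-differentiable near G₀ in the space of
    -- symmetric matrices, satisfying the defining equation for all symmetric positive
    -- definite G in a neighborhood of G₀
    (s : symMat m → ℝ)
    (U : Set (symMat m)) (hU : U ∈ nhds G₀)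
    (hpos : ∀ G ∈ U, 0 < s G)
    (hdiff : ∀ G ∈ U, DifferentiableAt ℝ s G)
    (hcons : ∀ G ∈ U, (Matrix.of (G : Fin m → Fin m → ℝ)).PosDef →
      (1 / (n : ℝ)) * ∑ i, ρ₀ (Real.sqrt
        (e i ⬝ᵥ (phiMat (Matrix.of (G : Fin m → Fin m → ℝ))⁻¹).mulVec (e i)) / s G) = δ₀)
    -- the distances dᵢ, assumed positive, with nonvanishing Σᵢ ψ₀(dᵢ)dᵢ
    (d : Fin n → ℝ)
    (hd : ∀ i, d i = Real.sqrt
      (e i ⬝ᵥ (phiMat (Matrix.of (G₀ : Fin m → Fin m → ℝ))⁻¹).mulVec (e i)) / s G₀)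
    (hdpos : ∀ i, 0 < d i)
    (hsum : ∑ i, deriv ρ₀ (d i) * d i ≠ 0)
    -- the scatter estimating equation at G₀
    (hesteq : ∑ i, w₀ (d i) • vecMulVec (e i) (e i) =
      ((s G₀ ^ 2 * ∑ i, deriv ρ₀ (d i) * d i) / (m : ℝ)) •
        (((Matrix.of (G₀ : Fin m → Fin m → ℝ)).det ^ (-(1 : ℝ) / (m : ℝ))) •
          Matrix.of (G₀ : Fin m → Fin m → ℝ))) :
    fderiv ℝ s G₀ = 0 := by
  have hρ : Differentiable ℝ ρ₀ := hρ₀.2.2.1.differentiable (by norm_num)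
  have hn : (n : ℝ) ≠ 0 := Nat.cast_ne_zero.mpr fun h => hsum (by subst h; simp)
  have hs₀ : s G₀ ≠ 0 := (hpos G₀ (mem_of_mem_nhds hU)).ne'
  set G := Matrix.of (G₀ : Fin m → Fin m → ℝ)
  refine ContinuousLinearMap.ext fun H => ?_
  set Hm := Matrix.of (H : Fin m → Fin m → ℝ)
  have hγ : HasDerivAt (fun t : ℝ => G₀ + t • H) H 0 := by
    simpa using ((hasDerivAt_id (0 : ℝ)).smul_const H).const_add G₀
  have hσ : HasDerivAt (fun t : ℝ => s (G₀ + t • H)) (fderiv ℝ s G₀ H) 0 :=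
    (hdiff G₀ (mem_of_mem_nhds hU)).hasFDerivAt.comp_hasDerivAt_of_eq 0 hγ (by simp)
  obtain ⟨M', hM', htrace⟩ :=
    exists_hasDerivAt_phiMat_inv_add_smul (by omega) hG₀.det_pos.ne' Hm
  have hconst : ∀ᶠ t in 𝓝 (0 : ℝ), ∑ i, ρ₀ (√(e i ⬝ᵥ phiMat (G + t • Hm)⁻¹ *ᵥ e i) /
      s (G₀ + t • H)) = n * δ₀ := by
    filter_upwards [hγ.continuousAt.eventually_mem (by simpa using hU),
      hG₀.eventually_add_smul (symMat.isHermitian H)] with t htU htPD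
    rw [← hcons _ htU htPD, ← mul_assoc, mul_one_div_cancel hn, one_mul]
    rfl
  -- the scatter estimating equation turns the weighted sum into a multiple of `tr (M' G)`
  have hweighted : ∑ i, deriv ρ₀ (d i) / d i * (e i ⬝ᵥ M' *ᵥ e i) = 0 := by
    simp_rw [← hw₀ _ (hdpos _).ne', ← trace_mul_sum_smul_vecMulVec, hesteq, mul_smul_comm,
      trace_smul, htrace, smul_zero]
  refine eq_zero_of_sum_rho_sqrt_div_eventually_eq hρ (fun i => hM'.dotProduct_mulVec (e i) (e i))
    hσ (by simpa using hs₀) (fun i => by simpa using hd i) (fun i => (hdpos i).ne') hconst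
    hweighted hsum

/-- **Vanishing of the derivative of the M-scale with respect to the shape matrix at the
S-estimator** (consistency condition, appendix): if the M-scale `s(G)` is defined on a
neighborhood of `G₀` in the space of symmetric matrices by
`(1/n) Σᵢ ρ₀(√(eᵢᵀ φ(G⁻¹) eᵢ)/s(G)) = δ₀` and the scatter estimating equation holds
at `G₀`, then the Fréchet derivative of `s` at `G₀` is zero. -/
theorem M_scale_derivative_in_shape_vanishes
    {n m : ℕ} (hm : 1 < m)
    (ρ₀ : ℝ → ℝ) (c₀ : ℝ) (hρ₀ : IsRhoFunction ρ₀ c₀)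
    (δ₀ : ℝ) (hδ : 0 < δ₀ ∧ δ₀ < ρ₀ c₀)
    (w₀ : ℝ → ℝ) (hw₀ : ∀ u : ℝ, u ≠ 0 → w₀ u = deriv ρ₀ u / u)
    -- the fixed residuals e₁, …, e_n
    (e : Fin n → Fin m → ℝ)
    -- the symmetric positive definite base point G₀
    (G₀ : symMat m) (hG₀ : (Matrix.of (G₀ : Fin m → Fin m → ℝ)).PosDef)
    -- the M-scale s, positive and Fréchet-differentiable near G₀ in the space of
    -- symmetric matrices, satisfying the defining equation for all symmetric positive
    -- definite G in a neighborhood of G₀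
    (s : symMat m → ℝ)
    (U : Set (symMat m)) (hU : U ∈ nhds G₀)
    (hpos : ∀ G ∈ U, 0 < s G)
    (hdiff : ∀ G ∈ U, DifferentiableAt ℝ s G)
    (hcons : ∀ G ∈ U, (Matrix.of (G : Fin m → Fin m → ℝ)).PosDef →
      (1 / (n : ℝ)) * ∑ i, ρ₀ (Real.sqrt
        (e i ⬝ᵥ (phiMat (Matrix.of (G : Fin m → Fin m → ℝ))⁻¹).mulVec (e i)) / s G) = δ₀)
    -- the distances dᵢ, assumed positive, with nonvanishing Σᵢ ψ₀(dᵢ)dᵢ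
    (d : Fin n → ℝ)
    (hd : ∀ i, d i = Real.sqrt
      (e i ⬝ᵥ (phiMat (Matrix.of (G₀ : Fin m → Fin m → ℝ))⁻¹).mulVec (e i)) / s G₀)
    (hdpos : ∀ i, 0 < d i)
    (hsum : ∑ i, deriv ρ₀ (d i) * d i ≠ 0)
    -- the scatter estimating equation at G₀
    (hesteq : ∑ i, w₀ (d i) • vecMulVec (e i) (e i) =
      ((s G₀ ^ 2 * ∑ i, deriv ρ₀ (d i) * d i) / (m : ℝ)) •
        (((Matrix.of (G₀ : Fin m → Fin m → ℝ)).det ^ (-(1 : ℝ) / (m : ℝ))) •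
          Matrix.of (G₀ : Fin m → Fin m → ℝ))) :
    fderiv ℝ s G₀ = 0 :=
  M_scale_derivative_in_shape_vanishes_general hm ρ₀ c₀ hρ₀ δ₀ w₀ hw₀ e G₀ hG₀ s U hU hpos hdiff
    hcons d hd hdpos hsum hesteq
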